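/- Let p be a prime and n ≥ 1, let 𝔽 = GaloisField p n, let G = AGL(1,p^n) = 𝔽 ⋊ 𝔽ˣ, and let π : G → 𝔽ˣ be the canonical projection. For a proper subgroup D of 𝔽ˣ, the subgroup π⁻¹(D) (i.e., 𝔽 ⋊ D) is meet irreducible in G if and only if (p^n − 1)/|D| is a prime power q^t with q prime and t ≥ 1. -/

import Mathlib

/-- A proper subgroup `K` is meet irreducible if whenever `K = A ⊓ B` then
`K = A` or `K = B`. -/
def IsProperMeetIrreducible {G : Type*} [Group G] (K : Subgroup G) : Prop :=
  K ≠ ⊤ ∧ ∀ A B : Subgroup G, K = A ⊓ B → K = A ∨ K = B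

/-- The canonical monoid homomorphism `AddAut A →* MulAut (Multiplicative A)`. -/
def addAutToMulAut (A : Type*) [AddGroup A] : Multiplicative (AddAut A) →* MulAut (Multiplicative A) where
  toFun f := AddEquiv.toMultiplicative (Multiplicative.toAdd f)
  map_one' := rfl
  map_mul' _ _ := rfl

/-- The action of `𝔽ˣ` on the additive group of `𝔽 = GaloisField p n`
by field multiplication, as a map into multiplicative automorphisms. -/
noncomputable def aglAction (p n : ℕ) [Fact p.Prime] :
    (GaloisField p n)ˣ →* MulAut (Multiplicative (GaloisField p n)) :=
  (addAutToMulAut _).comp (DistribMulAction.toAddAut (GaloisField p n)ˣ (GaloisField p n))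

/-- `AGL(1, p^n) = 𝔽 ⋊ 𝔽ˣ`, the affine general linear group of degree one
over the field with `p ^ n` elements. -/
noncomputable abbrev AGL1 (p n : ℕ) [Fact p.Prime] : Type :=
  Multiplicative (GaloisField p n) ⋊[aglAction p n] (GaloisField p n)ˣ

/-!
Since `π` is surjective, `comap π` identifies the subgroups of `𝔽ˣ` with the subgroups of
`AGL(1, p^n)` containing `ker π = 𝔽`, an upward closed set, so `π⁻¹(D)` is meet irreducible iff
`D` is. In the cyclic group `𝔽ˣ` a subgroup is determined by its order, inclusion is divisibility
of orders and meets correspond to gcds; hence the subgroups above `D` correspond to the divisors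
of the index `k = (p^n - 1)/|D|`, and `D` is meet irreducible iff `k ≠ 1` has no two coprime
divisors other than `1`, i.e. iff `k` is a prime power.
-/

theorem Nat.isPrimePow_iff_forall_coprime_dvd {k : ℕ} :
    IsPrimePow k ↔ k ≠ 1 ∧ ∀ a b, a ∣ k → b ∣ k → a.Coprime b → a = 1 ∨ b = 1 := by
  rw [isPrimePow_iff_unique_prime_dvd]
  constructor
  · rintro ⟨p, ⟨hp, hpk⟩, hunique⟩
    refine ⟨by rintro rfl; exact hp.one_lt.ne' (Nat.dvd_one.mp hpk), fun a b ha hb hab => ?_⟩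
    by_contra! h
    have hpa := hunique _ ⟨Nat.minFac_prime h.1, (Nat.minFac_dvd a).trans ha⟩
    have hpb := hunique _ ⟨Nat.minFac_prime h.2, (Nat.minFac_dvd b).trans hb⟩
    have : p ∣ a.gcd b := Nat.dvd_gcd (hpa ▸ Nat.minFac_dvd a) (hpb ▸ Nat.minFac_dvd b)
    exact hp.one_lt.ne' (Nat.dvd_one.mp (hab ▸ this))
  · rintro ⟨hk, hirr⟩
    refine ⟨k.minFac, ⟨Nat.minFac_prime hk, Nat.minFac_dvd k⟩, fun q ⟨hq, hqk⟩ => ?_⟩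
    by_contra hne
    have hcop := (Nat.coprime_primes hq (Nat.minFac_prime hk)).mpr hne
    rcases hirr q k.minFac hqk (Nat.minFac_dvd k) hcop with h | h
    · exact hq.one_lt.ne' h
    · exact (Nat.minFac_prime hk).one_lt.ne' h

theorem infIrred_apply_iff {α β : Type*} [SemilatticeInf α] [SemilatticeInf β] {φ : α → β}
    (hinj : Function.Injective φ) (hinf : ∀ a b, φ (a ⊓ b) = φ a ⊓ φ b)
    (hup : ∀ a b, φ a ≤ b → b ∈ Set.range φ) {a : α} :
    InfIrred (φ a) ↔ InfIrred a := by
  have hle : ∀ {a b}, φ a ≤ φ b ↔ a ≤ b := by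
    intro a b
    rw [← inf_eq_left, ← hinf, hinj.eq_iff, inf_eq_left]
  constructor
  · rintro ⟨hmax, hirr⟩
    refine ⟨fun ha => hmax fun b hb => ?_, fun b c hbc => ?_⟩
    · obtain ⟨b, rfl⟩ := hup _ _ hb
      exact hle.mpr (ha (hle.mp hb))
    · simpa only [hinj.eq_iff] using hirr (b := φ b) (c := φ c) (by rw [← hinf, hbc])
  · rintro ⟨hmax, hirr⟩
    refine ⟨fun ha => hmax fun b hb => hle.mp (ha (hle.mpr hb)), fun b c hbc => ?_⟩
    obtain ⟨b, rfl⟩ := hup a b (hbc ▸ inf_le_left)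
    obtain ⟨c, rfl⟩ := hup a c (hbc ▸ inf_le_right)
    rw [← hinf, hinj.eq_iff] at hbc
    simpa only [hinj.eq_iff] using hirr hbc

theorem isProperMeetIrreducible_iff_infIrred {G : Type*} [Group G] (K : Subgroup G) :
    IsProperMeetIrreducible K ↔ InfIrred K :=
  and_congr (not_congr isMax_iff_eq_top).symm
    ⟨fun h _ _ hAB => (h _ _ hAB.symm).imp Eq.symm Eq.symm,
      fun h _ _ hAB => (h hAB.symm).imp Eq.symm Eq.symm⟩

namespace Subgroup

theorem infIrred_comap_iff {G H : Type*} [Group G] [Group H] {f : G →* H}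
    (hf : Function.Surjective f) {D : Subgroup H} :
    InfIrred (D.comap f) ↔ InfIrred D :=
  infIrred_apply_iff (comap_injective hf) (fun _ _ => comap_inf _ _ _)
    fun D K hDK => ⟨K.map f, comap_map_eq_self ((ker_le_comap f D).trans hDK)⟩

section Cyclic

variable {G : Type*} [CommGroup G]

theorem ker_powMonoidHom_inf (a b : ℕ) :
    (powMonoidHom a : G →* G).ker ⊓ (powMonoidHom b).ker = (powMonoidHom (a.gcd b)).ker := by
  ext x
  simp only [mem_inf, MonoidHom.mem_ker, powMonoidHom_apply, pow_gcd_eq_one]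

variable [Finite G] [IsCyclic G]

theorem ker_powMonoidHom_card (H : Subgroup G) :
    (powMonoidHom (Nat.card H) : G →* G).ker = H := by
  refine (eq_of_le_of_card_ge (fun x hx => ?_) ?_).symm
  · exact orderOf_dvd_iff_pow_eq_one.mp (H.orderOf_dvd_natCard hx)
  · rw [IsCyclic.card_powMonoidHom_ker, Nat.gcd_eq_right (card_subgroup_dvd_card H)]

theorem le_iff_card_dvd_of_isCyclic {H K : Subgroup G} : H ≤ K ↔ Nat.card H ∣ Nat.card K := by
  refine ⟨card_dvd_of_le, fun h x hx => ?_⟩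
  rw [← ker_powMonoidHom_card K]
  exact orderOf_dvd_iff_pow_eq_one.mp ((H.orderOf_dvd_natCard hx).trans h)

theorem card_inf_of_isCyclic (H K : Subgroup G) :
    Nat.card (H ⊓ K : Subgroup G) = (Nat.card H).gcd (Nat.card K) := by
  calc Nat.card (H ⊓ K : Subgroup G)
      = Nat.card (powMonoidHom ((Nat.card H).gcd (Nat.card K)) : G →* G).ker := by
        rw [← ker_powMonoidHom_inf, ker_powMonoidHom_card, ker_powMonoidHom_card]
    _ = (Nat.card H).gcd (Nat.card K) := by
        rw [IsCyclic.card_powMonoidHom_ker,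
          Nat.gcd_eq_right ((Nat.gcd_dvd_left _ _).trans (card_subgroup_dvd_card H))]

theorem eq_of_card_eq_of_isCyclic {H K : Subgroup G} (h : Nat.card H = Nat.card K) : H = K :=
  le_antisymm (le_iff_card_dvd_of_isCyclic.mpr h.dvd) (le_iff_card_dvd_of_isCyclic.mpr h.symm.dvd)

theorem exists_card_eq_of_isCyclic {d : ℕ} (hd : d ∣ Nat.card G) :
    ∃ H : Subgroup G, Nat.card H = d :=
  ⟨_, by rw [IsCyclic.card_powMonoidHom_ker, Nat.gcd_eq_right hd]⟩

theorem infIrred_iff_isPrimePow_index_of_isCyclic (D : Subgroup G) :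
    InfIrred D ↔ IsPrimePow D.index := by
  rw [Nat.isPrimePow_iff_forall_coprime_dvd, Ne, index_eq_one, ← isMax_iff_eq_top]
  refine and_congr_right fun _ => ?_
  have hcard : Nat.card D * D.index = Nat.card G := card_mul_index D
  have hD : Nat.card D ≠ 0 := Nat.card_pos.ne'
  constructor
  · intro hirr e f he hf hef
    obtain ⟨A, hA⟩ := exists_card_eq_of_isCyclic (hcard ▸ mul_dvd_mul_left (Nat.card D) he)
    obtain ⟨B, hB⟩ := exists_card_eq_of_isCyclic (hcard ▸ mul_dvd_mul_left (Nat.card D) hf)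
    have hAB : A ⊓ B = D := eq_of_card_eq_of_isCyclic <| by
      rw [card_inf_of_isCyclic, hA, hB, Nat.gcd_mul_left, hef, mul_one]
    refine (hirr hAB).imp (fun h => ?_) (fun h => ?_)
    · rwa [h, eq_comm, mul_eq_left₀ hD] at hA
    · rwa [h, eq_comm, mul_eq_left₀ hD] at hB
  · intro hindex A B hAB
    obtain ⟨e, he⟩ := card_dvd_of_le (hAB ▸ inf_le_left : D ≤ A)
    obtain ⟨f, hf⟩ := card_dvd_of_le (hAB ▸ inf_le_right : D ≤ B)
    have hdvd : ∀ {K : Subgroup G} {c}, Nat.card K = Nat.card D * c → c ∣ D.index := by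
      intro K c hK
      refine Nat.dvd_of_mul_dvd_mul_left (Nat.pos_of_ne_zero hD) ?_
      rw [← hK, hcard]
      exact card_subgroup_dvd_card K
    have hef : e.Coprime f := by
      have h := card_inf_of_isCyclic A B
      rwa [hAB, he, hf, Nat.gcd_mul_left, eq_comm, mul_eq_left₀ hD] at h
    refine (hindex e f (hdvd he) (hdvd hf) hef).imp (fun h => ?_) (fun h => ?_)
    · exact eq_of_card_eq_of_isCyclic (by rw [he, h, mul_one])
    · exact eq_of_card_eq_of_isCyclic (by rw [hf, h, mul_one])

end Cyclic

end Subgroup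

theorem AGL1_full_kernel_meet_irreducible_iff_general (p n : ℕ) [Fact p.Prime] (hn : 1 ≤ n)
    (D : Subgroup (GaloisField p n)ˣ) :
    IsProperMeetIrreducible
        (D.comap (SemidirectProduct.rightHom :
          AGL1 p n →* (GaloisField p n)ˣ)) ↔
      ∃ q t : ℕ, q.Prime ∧ 1 ≤ t ∧ (p ^ n - 1) / Nat.card D = q ^ t := by
  have hindex : (p ^ n - 1) / Nat.card D = D.index := by
    rw [← GaloisField.card p n (by omega), ← Nat.card_units, ← Subgroup.card_mul_index D,
      Nat.mul_div_cancel_left _ Nat.card_pos]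
  rw [isProperMeetIrreducible_iff_infIrred,
    Subgroup.infIrred_comap_iff SemidirectProduct.rightHom_surjective,
    Subgroup.infIrred_iff_isPrimePow_index_of_isCyclic, hindex, isPrimePow_nat_iff]
  exact exists₂_congr fun q t => and_congr_right' (and_congr_right' eq_comm)

theorem AGL1_full_kernel_meet_irreducible_iff (p n : ℕ) [Fact p.Prime] (hn : 1 ≤ n)
    (D : Subgroup (GaloisField p n)ˣ) (hD : D ≠ ⊤) :
    IsProperMeetIrreducible
        (D.comap (SemidirectProduct.rightHom :
          AGL1 p n →* (GaloisField p n)ˣ)) ↔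
      ∃ q t : ℕ, q.Prime ∧ 1 ≤ t ∧ (p ^ n - 1) / Nat.card D = q ^ t :=
  AGL1_full_kernel_meet_irreducible_iff_general p n hn D
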